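/- Let (C, Id_C) and (A, α_A) be Hom-Leibniz algebras with a Hom-action of (C,Id_C) on (A,α_A). A short exact sequence of Hom-Leibniz algebras 0 → (A,α_A) →^i (B,α_B) →^π (C,Id_C) → 0 admits a splitting homomorphism s with π∘s = Id_C and α_B∘s = s (and the induced action c·a = [s(c), i(a)], a·c = [i(a), s(c)] equals the given action) if and only if it is equivalent to the semi-direct product sequence 0 → (A,α_A) → (A⋊C, α̃) → (C,Id_C) → 0, i.e. there exists a Hom-Leibniz homomorphism φ : A⋊C → B with φ∘j = i and π∘φ = p. -/

import Mathlib

/-!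
A splitting `s` and an equivalence `φ : A ⋊ C → B` determine each other by `φ = [i, s]`
(that is, `φ (a, c) = i a + s c`) and `s = φ ∘ inr`. In the semi-direct product
`(0, c)` and `(a, 0)` bracket to `(c·a, 0)` and `(a·c, 0)`, so `φ` being a homomorphism
is the same as `s` being one together with the compatibility of `s` with the action;
`π ∘ φ = p` only needs `π ∘ i = 0`.
-/

open LinearMap

/-- A (multiplicative) Hom-Leibniz algebra structure. -/
def IsHomLeibniz {K L : Type*} [Field K] [AddCommGroup L] [Module K L]
    (br : L →ₗ[K] L →ₗ[K] L) (a : L →ₗ[K] L) : Prop :=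
  (∀ x y z, br (a x) (br y z) = br (br x y) (a z) - br (br x z) (a y)) ∧
  ∀ x y, a (br x y) = br (a x) (a y)

/-- A homomorphism of Hom-Leibniz algebras. -/
def IsHomLeibnizHom {K L₁ L₂ : Type*} [Field K] [AddCommGroup L₁] [Module K L₁]
    [AddCommGroup L₂] [Module K L₂]
    (br₁ : L₁ →ₗ[K] L₁ →ₗ[K] L₁) (a₁ : L₁ →ₗ[K] L₁)
    (br₂ : L₂ →ₗ[K] L₂ →ₗ[K] L₂) (a₂ : L₂ →ₗ[K] L₂) (f : L₁ →ₗ[K] L₂) : Prop :=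
  (∀ x y, f (br₁ x y) = br₂ (f x) (f y)) ∧ f ∘ₗ a₁ = a₂ ∘ₗ f

/-- A (right) Hom-action of `(L, brL, aL)` on `(M, brM, aM)`, with left action
`lam : L → M → M` and right action `rho : M → L → M`. -/
structure IsHomAction {K L M : Type*} [Field K] [AddCommGroup L] [Module K L]
    [AddCommGroup M] [Module K M]
    (brL : L →ₗ[K] L →ₗ[K] L) (aL : L →ₗ[K] L)
    (brM : M →ₗ[K] M →ₗ[K] M) (aM : M →ₗ[K] M)
    (lam : L →ₗ[K] M →ₗ[K] M) (rho : M →ₗ[K] L →ₗ[K] M) : Prop where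
  act_a : ∀ m x y, rho (aM m) (brL x y) = rho (rho m x) (aL y) - rho (rho m y) (aL x)
  act_b : ∀ x m y, lam (aL x) (rho m y) = rho (lam x m) (aL y) - lam (brL x y) (aM m)
  act_c : ∀ x y m, lam (aL x) (lam y m) = lam (brL x y) (aM m) - rho (lam x m) (aL y)
  act_d : ∀ x m m', lam (aL x) (brM m m') = brM (lam x m) (aM m') - brM (lam x m') (aM m)
  act_e : ∀ m m' x, brM (aM m) (rho m' x) = rho (brM m m') (aL x) - brM (rho m x) (aM m')
  act_f : ∀ m x m', brM (aM m) (lam x m') = brM (rho m x) (aM m') - rho (brM m m') (aL x)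
  act_g : ∀ x m, aM (lam x m) = lam (aL x) (aM m)
  act_h : ∀ m x, aM (rho m x) = rho (aM m) (aL x)

/-- The semi-direct product bracket on `M × L`:
`[(m₁,l₁),(m₂,l₂)] = ([m₁,m₂] + α_L(l₁)·m₂ + m₁·α_L(l₂), [l₁,l₂])`. -/
def sdBracket {K L M : Type*} [Field K] [AddCommGroup L] [Module K L]
    [AddCommGroup M] [Module K M]
    (brM : M →ₗ[K] M →ₗ[K] M) (brL : L →ₗ[K] L →ₗ[K] L) (aL : L →ₗ[K] L)
    (lam : L →ₗ[K] M →ₗ[K] M) (rho : M →ₗ[K] L →ₗ[K] M) :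
    (M × L) →ₗ[K] (M × L) →ₗ[K] (M × L) :=
  LinearMap.mk₂ K
    (fun p q => (brM p.1 q.1 + lam (aL p.2) q.1 + rho p.1 (aL q.2), brL p.2 q.2))
    (by intro p p' q; simp [Prod.ext_iff]; abel)
    (by intro c p q; simp [Prod.ext_iff, smul_add])
    (by intro p q q'; simp [Prod.ext_iff]; abel)
    (by intro c p q; simp [Prod.ext_iff, smul_add])

section SemidirectProduct

variable {K L M B : Type*} [Field K] [AddCommGroup L] [Module K L] [AddCommGroup M] [Module K M]
  [AddCommGroup B] [Module K B]
  {brM : M →ₗ[K] M →ₗ[K] M} {aM : M →ₗ[K] M} {brL : L →ₗ[K] L →ₗ[K] L} {aL : L →ₗ[K] L}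
  {lam : L →ₗ[K] M →ₗ[K] M} {rho : M →ₗ[K] L →ₗ[K] M}
  {brB : B →ₗ[K] B →ₗ[K] B} {aB : B →ₗ[K] B}

@[simp]
theorem sdBracket_apply (p q : M × L) :
    sdBracket brM brL aL lam rho p q =
      (brM p.1 q.1 + lam (aL p.2) q.1 + rho p.1 (aL q.2), brL p.2 q.2) :=
  rfl

theorem sdBracket_inr_inl (l : L) (m : M) :
    sdBracket brM brL aL lam rho (inr K M L l) (inl K M L m) = inl K M L (lam (aL l) m) := by
  simp

theorem sdBracket_inl_inr (m : M) (l : L) :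
    sdBracket brM brL aL lam rho (inl K M L m) (inr K M L l) = inl K M L (rho m (aL l)) := by
  simp

theorem sdBracket_inr_inr (l l' : L) :
    sdBracket brM brL aL lam rho (inr K M L l) (inr K M L l') = inr K M L (brL l l') := by
  simp

theorem isHomLeibnizHom_coprod {i : M →ₗ[K] B} {s : L →ₗ[K] B}
    (hi : IsHomLeibnizHom brM aM brB aB i) (hs : IsHomLeibnizHom brL aL brB aB s)
    (hlam : ∀ l m, i (lam (aL l) m) = brB (s l) (i m))
    (hrho : ∀ m l, i (rho m (aL l)) = brB (i m) (s l)) :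
    IsHomLeibnizHom (sdBracket brM brL aL lam rho) (aM.prodMap aL) brB aB (i.coprod s) := by
  refine ⟨fun ⟨m₁, l₁⟩ ⟨m₂, l₂⟩ => ?_, ?_⟩
  · simp only [sdBracket_apply, coprod_apply, map_add, LinearMap.add_apply, hi.1, hs.1, hlam, hrho]
    abel
  · ext m
    · simpa using congr($(hi.2) m)
    · simpa using congr($(hs.2) m)

namespace IsHomLeibnizHom

variable {φ : M × L →ₗ[K] B}
  (hφ : IsHomLeibnizHom (sdBracket brM brL aL lam rho) (aM.prodMap aL) brB aB φ)
include hφ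

theorem comp_inr : IsHomLeibnizHom brL aL brB aB (φ ∘ₗ inr K M L) := by
  refine ⟨fun l l' => by simp only [comp_apply, ← hφ.1, sdBracket_inr_inr], ?_⟩
  ext l
  simpa using congr($(hφ.2) (inr K M L l))

theorem map_inl_lam (l : L) (m : M) :
    φ (inl K M L (lam (aL l) m)) = brB (φ (inr K M L l)) (φ (inl K M L m)) := by
  rw [← sdBracket_inr_inl, hφ.1]

theorem map_inl_rho (m : M) (l : L) :
    φ (inl K M L (rho m (aL l))) = brB (φ (inl K M L m)) (φ (inr K M L l)) := by
  rw [← sdBracket_inl_inr, hφ.1]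

end IsHomLeibnizHom

end SemidirectProduct

theorem statement7_general {K A B C : Type*} [Field K] [AddCommGroup A] [Module K A]
    [AddCommGroup B] [Module K B] [AddCommGroup C] [Module K C]
    (brA : A →ₗ[K] A →ₗ[K] A) (aA : A →ₗ[K] A)
    (brB : B →ₗ[K] B →ₗ[K] B) (aB : B →ₗ[K] B)
    (brC : C →ₗ[K] C →ₗ[K] C)
    (lam : C →ₗ[K] A →ₗ[K] A) (rho : A →ₗ[K] C →ₗ[K] A)
    (i : A →ₗ[K] B) (π : B →ₗ[K] C)
    (hi : IsHomLeibnizHom brA aA brB aB i)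
    (hexact : LinearMap.range i = LinearMap.ker π) :
    (∃ s : C →ₗ[K] B, IsHomLeibnizHom brC LinearMap.id brB aB s ∧
        π ∘ₗ s = LinearMap.id ∧ aB ∘ₗ s = s ∧
        (∀ c a, i (lam c a) = brB (s c) (i a)) ∧
        (∀ a c, i (rho a c) = brB (i a) (s c))) ↔
    (∃ φ : A × C →ₗ[K] B,
        IsHomLeibnizHom (sdBracket brA brC LinearMap.id lam rho)
          (aA.prodMap LinearMap.id) brB aB φ ∧
        φ ∘ₗ LinearMap.inl K A C = i ∧ π ∘ₗ φ = LinearMap.snd K A C) := by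
  constructor
  · rintro ⟨s, hs, hπs, -, hlam, hrho⟩
    refine ⟨i.coprod s, isHomLeibnizHom_coprod (aL := id) hi hs hlam hrho, coprod_inl i s, ?_⟩
    have hπi : π ∘ₗ i = 0 := range_le_ker_iff.mp hexact.le
    rw [comp_coprod, hπi, hπs, coprod_zero_left, id_comp]
  · rintro ⟨φ, hφ, hφi, hπφ⟩
    have hs := hφ.comp_inr
    refine ⟨φ ∘ₗ inr K A C, hs, by rw [← comp_assoc, hπφ, snd_comp_inr], by rw [← hs.2, comp_id],
      fun c a => ?_, fun a c => ?_⟩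
    · rw [← hφi]
      exact hφ.map_inl_lam c a
    · rw [← hφi]
      exact hφ.map_inl_rho a c

/-- let `(C, Id_C)` and `(A, α_A)` be Hom-Leibniz algebras with a Hom-action
of `(C, Id)` on `(A, α_A)`, and let `0 → A →ⁱ B →^π C → 0` be a short exact sequence of
Hom-Leibniz algebras.  The sequence admits a splitting Hom-Leibniz homomorphism `s`
(with `π∘s = Id`, `α_B∘s = s`, inducing the given action) if and only if it is
equivalent to the semi-direct product sequence `0 → A → A⋊C → C → 0`, i.e. there is a
Hom-Leibniz homomorphism `φ : A⋊C → B` with `φ∘j = i` and `π∘φ = p`. -/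
theorem statement7 {K A B C : Type*} [Field K] [AddCommGroup A] [Module K A]
    [AddCommGroup B] [Module K B] [AddCommGroup C] [Module K C]
    (brA : A →ₗ[K] A →ₗ[K] A) (aA : A →ₗ[K] A)
    (brB : B →ₗ[K] B →ₗ[K] B) (aB : B →ₗ[K] B)
    (brC : C →ₗ[K] C →ₗ[K] C)
    (hA : IsHomLeibniz brA aA) (hB : IsHomLeibniz brB aB)
    (hC : IsHomLeibniz brC (LinearMap.id : C →ₗ[K] C))
    (lam : C →ₗ[K] A →ₗ[K] A) (rho : A →ₗ[K] C →ₗ[K] A)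
    (hact : IsHomAction brC LinearMap.id brA aA lam rho)
    (i : A →ₗ[K] B) (π : B →ₗ[K] C)
    (hi : IsHomLeibnizHom brA aA brB aB i) (hπ : IsHomLeibnizHom brB aB brC LinearMap.id π)
    (hinj : Function.Injective i) (hsurj : Function.Surjective π)
    (hexact : LinearMap.range i = LinearMap.ker π) :
    (∃ s : C →ₗ[K] B, IsHomLeibnizHom brC LinearMap.id brB aB s ∧
        π ∘ₗ s = LinearMap.id ∧ aB ∘ₗ s = s ∧
        (∀ c a, i (lam c a) = brB (s c) (i a)) ∧
        (∀ a c, i (rho a c) = brB (i a) (s c))) ↔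
    (∃ φ : A × C →ₗ[K] B,
        IsHomLeibnizHom (sdBracket brA brC LinearMap.id lam rho)
          (aA.prodMap LinearMap.id) brB aB φ ∧
        φ ∘ₗ LinearMap.inl K A C = i ∧ π ∘ₗ φ = LinearMap.snd K A C) :=
  statement7_general brA aA brB aB brC lam rho i π hi hexact
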